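/- arXiv:1112.4002 — 2 statements merged into one kernel-verified Lean document; each statement's English description precedes it below -/
import Mathlib

section
/- Let W be a graph on vertex set {1,...,n} and F a graph on a vertex set N_F ⊆ {1,...,n}, and let H = W ∪ F (union of edge sets on {1,...,n}). If N_F is nonempty, then the size of the largest connected component of H satisfies C₁(H) ≤ C₁(W) + C₂(W)·(|N_F| − 1), where C₁(W) and C₂(W) denote the sizes of the largest and second largest connected components of W respectively. -/
/-- The multiset of sizes of the connected components of a finite graph. -/
noncomputable def compSizes {V : Type*} [Fintype V] (G : SimpleGraph V) : Multiset ℕ :=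
  (@Finset.univ G.ConnectedComponent (Fintype.ofFinite _)).val.map
    fun c => Nat.card c.supp

/-- The size of the `i`-th largest connected component (1-indexed; 0 if fewer components). -/
noncomputable def compC {V : Type*} [Fintype V] (G : SimpleGraph V) (i : ℕ) : ℕ :=
  ((compSizes G).sort (· ≥ ·)).getD (i - 1) 0

/-!
Every connected component `D` of `W ⊔ F` is the disjoint union of the components of `W` it
contains. If there are at least two of them, a walk in `W ⊔ F` leaving any one of them must use an
edge of `F`, so each of them contains a vertex of `N_F`; hence `D` contains at most
`max 1 |N_F|` components of `W`. Bounding the largest of them by `C₁(W)` and every other one by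
`C₂(W)` gives the estimate.
-/

open Finset SimpleGraph

namespace Multiset

variable {α : Type*} [LinearOrder α] {s : Multiset α} {a : α}

theorem le_getD_zero_sort_ge (b : α) (ha : a ∈ s) : a ≤ (s.sort (· ≥ ·)).getD 0 b := by
  have hmem : a ∈ s.sort (· ≥ ·) := (mem_sort _).2 ha
  have hsorted := s.pairwise_sort (· ≥ ·)
  rcases hl : s.sort (· ≥ ·) with _ | ⟨x, t⟩
  · simp [hl] at hmem
  · rw [hl] at hmem hsorted
    rcases List.mem_cons.1 hmem with rfl | hat
    · exact le_rfl
    · exact List.rel_of_pairwise_cons hsorted hat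

theorem le_getD_one_sort_ge (b : α) (h : 2 ≤ s.countP (a ≤ ·)) :
    a ≤ (s.sort (· ≥ ·)).getD 1 b := by
  have hsorted := s.pairwise_sort (· ≥ ·)
  have hcount : 2 ≤ (s.sort (· ≥ ·)).countP (a ≤ ·) := by
    rwa [← coe_countP, sort_eq]
  have hlen : 2 ≤ (s.sort (· ≥ ·)).length := hcount.trans List.countP_le_length
  rcases hl : s.sort (· ≥ ·) with _ | ⟨x, _ | ⟨y, t⟩⟩
  · simp [hl] at hlen
  · simp [hl] at hlen
  · rw [hl] at hcount hsorted
    rw [List.getD_cons_succ, List.getD_cons_zero]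
    by_contra! hya
    have htail : t.countP (a ≤ ·) = 0 := List.countP_eq_zero.2 fun z hz => by
      have := List.rel_of_pairwise_cons (List.pairwise_cons.1 hsorted).2 hz
      simp only [decide_eq_true_eq, not_le]
      exact lt_of_le_of_lt this hya
    simp only [List.countP_cons, htail, decide_eq_true_eq, not_le.2 hya] at hcount
    split_ifs at hcount <;> omega

end Multiset

namespace SimpleGraph

variable {V : Type*}

section CompC

variable [Fintype V] {G : SimpleGraph V}

theorem card_supp_mem_compSizes (c : G.ConnectedComponent) : Nat.card c.supp ∈ compSizes G :=
  Multiset.mem_map_of_mem _ (@Finset.mem_univ _ (Fintype.ofFinite _) c)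

theorem card_supp_le_compC_one (c : G.ConnectedComponent) : Nat.card c.supp ≤ compC G 1 :=
  Multiset.le_getD_zero_sort_ge 0 (card_supp_mem_compSizes c)

theorem card_supp_le_compC_two {c m : G.ConnectedComponent} (hcm : c ≠ m)
    (hle : Nat.card c.supp ≤ Nat.card m.supp) : Nat.card c.supp ≤ compC G 2 := by
  refine Multiset.le_getD_one_sort_ge 0 ?_
  rw [compSizes, Multiset.countP_map, ← Finset.filter_val, ← Finset.card_def]
  -- `compSizes` enumerates the components through `Fintype.ofFinite`, not the synthesized instance
  have mem_univ' := @mem_univ _ (Fintype.ofFinite G.ConnectedComponent)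
  exact one_lt_card.2 ⟨c, mem_filter.2 ⟨mem_univ' c, le_rfl⟩, m, mem_filter.2 ⟨mem_univ' m, hle⟩, hcm⟩

theorem compC_one_le {b : ℕ} (h : ∀ c : G.ConnectedComponent, Nat.card c.supp ≤ b) :
    compC G 1 ≤ b := by
  have hmem : ∀ x ∈ (compSizes G).sort (· ≥ ·), x ≤ b := fun x hx => by
    obtain ⟨c, -, rfl⟩ := Multiset.mem_map.1 ((Multiset.mem_sort _).1 hx)
    exact h c
  unfold compC
  rcases hl : (compSizes G).sort (· ≥ ·) with _ | ⟨x, t⟩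
  · simp
  · exact hmem x (by simp [hl])

theorem sum_card_supp_le (T : Finset G.ConnectedComponent) :
    ∑ c ∈ T, Nat.card c.supp ≤ compC G 1 + compC G 2 * (#T - 1) := by
  classical
  rcases T.eq_empty_or_nonempty with rfl | hT
  · simp
  obtain ⟨m, hm, hmax⟩ := T.exists_max_image (fun c => Nat.card c.supp) hT
  calc ∑ c ∈ T, Nat.card c.supp
      = Nat.card m.supp + ∑ c ∈ T.erase m, Nat.card c.supp := (add_sum_erase T _ hm).symm
    _ ≤ compC G 1 + ∑ _c ∈ T.erase m, compC G 2 := by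
        gcongr with c hc
        · exact card_supp_le_compC_one m
        · exact card_supp_le_compC_two (ne_of_mem_erase hc) (hmax c (mem_of_mem_erase hc))
    _ = compC G 1 + compC G 2 * (#T - 1) := by
        rw [sum_const, card_erase_of_mem hm, smul_eq_mul, mul_comm]

end CompC

theorem Walk.exists_adj_right_of_connectedComponentMk_ne {W F : SimpleGraph V} {u v : V}
    (p : (W ⊔ F).Walk u v) (huv : W.connectedComponentMk u ≠ W.connectedComponentMk v) :
    ∃ x y, F.Adj x y ∧ W.connectedComponentMk x = W.connectedComponentMk u := by
  induction p with
  | nil => exact absurd rfl huv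
  | @cons u w v huw p ih =>
    by_cases hW : W.connectedComponentMk u = W.connectedComponentMk w
    · obtain ⟨x, y, hxy, hx⟩ := ih (hW ▸ huv)
      exact ⟨x, y, hxy, hx.trans hW.symm⟩
    · rcases huw with huw | huw
      · exact absurd (ConnectedComponent.sound huw.reachable) hW
      · exact ⟨u, w, huw, rfl⟩

section Subcomponents

variable [Fintype V] {G G' : SimpleGraph V}

open Classical in
noncomputable def ConnectedComponent.subcomponents (G : SimpleGraph V)
    (d : G'.ConnectedComponent) : Finset G.ConnectedComponent :=
  {c | c.supp ⊆ d.supp}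

theorem ConnectedComponent.mem_subcomponents {d : G'.ConnectedComponent}
    {c : G.ConnectedComponent} : c ∈ d.subcomponents G ↔ c.supp ⊆ d.supp := by
  simp [subcomponents]

theorem ConnectedComponent.card_supp_eq_sum_subcomponents (h : G ≤ G')
    (d : G'.ConnectedComponent) :
    Nat.card d.supp = ∑ c ∈ d.subcomponents G, Nat.card c.supp := by
  classical
  have hmaps : (d.supp.toFinset : Set V).MapsTo G.connectedComponentMk (d.subcomponents G) :=
    fun v hv => mem_subcomponents.2 <|
      d.connectedComponentMk_supp_subset_supp h (by simpa using hv)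
  rw [Nat.card_eq_card_toFinset, card_eq_sum_card_fiberwise hmaps]
  refine sum_congr rfl fun c hc => ?_
  rw [Nat.card_eq_card_toFinset]
  congr 1
  ext v
  simpa using fun hv => mem_subcomponents.1 hc hv

open Classical in
theorem ConnectedComponent.subcomponents_subset_image {W F : SimpleGraph V}
    {S : Finset V} (hF : ∀ x y, F.Adj x y → x ∈ S) (d : (W ⊔ F).ConnectedComponent)
    (h : 1 < #(d.subcomponents W)) : d.subcomponents W ⊆ S.image W.connectedComponentMk := by
  intro c hc
  obtain ⟨c', hc', hne⟩ := exists_mem_ne h c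
  induction c using ConnectedComponent.ind with | h v => ?_
  induction c' using ConnectedComponent.ind with | h u => ?_
  have hv : v ∈ d.supp := mem_subcomponents.1 hc rfl
  have hu : u ∈ d.supp := mem_subcomponents.1 hc' rfl
  obtain ⟨p⟩ : (W ⊔ F).Reachable v u := ConnectedComponent.exact (hv.trans hu.symm)
  obtain ⟨x, y, hxy, hx⟩ := p.exists_adj_right_of_connectedComponentMk_ne hne.symm
  exact mem_image.2 ⟨x, hF x y hxy, hx⟩

end Subcomponents

end SimpleGraph

theorem stmt0_general {n : ℕ} (W F : SimpleGraph (Fin n)) (NF : Finset (Fin n))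
    (hF : ∀ i j, F.Adj i j → i ∈ NF ∧ j ∈ NF) :
    compC (W ⊔ F) 1 ≤ compC W 1 + compC W 2 * (NF.card - 1) := by
  classical
  refine compC_one_le fun d => ?_
  have hcard : #(d.subcomponents W) - 1 ≤ #NF - 1 := by
    rcases le_or_gt #(d.subcomponents W) 1 with h | h
    · omega
    · have hsub := d.subcomponents_subset_image (fun x y hxy => (hF x y hxy).1) h
      exact Nat.sub_le_sub_right ((card_le_card hsub).trans card_image_le) 1
  calc Nat.card d.supp = ∑ c ∈ d.subcomponents W, Nat.card c.supp :=
        d.card_supp_eq_sum_subcomponents le_sup_left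
    _ ≤ compC W 1 + compC W 2 * (#(d.subcomponents W) - 1) := sum_card_supp_le _
    _ ≤ compC W 1 + compC W 2 * (#NF - 1) := by gcongr

/-- If `W` is a graph on `{1,…,n}` and `F` is a graph on a nonempty vertex set
`N_F ⊆ {1,…,n}`, then for `H = W ∪ F` we have
`C₁(H) ≤ C₁(W) + C₂(W)·(|N_F| − 1)`. -/
theorem stmt0 {n : ℕ} (W F : SimpleGraph (Fin n)) (NF : Finset (Fin n))
    (hF : ∀ i j, F.Adj i j → i ∈ NF ∧ j ∈ NF) (hNF : NF.Nonempty) :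
    compC (W ⊔ F) 1 ≤ compC W 1 + compC W 2 * (NF.card - 1) :=
  stmt0_general W F NF hF
end

section
/- Let a, b ≥ 0, α ∈ [0,1], and suppose a < 1 and b < 1. Then λ*_{fw} = (a + b + √((a−b)² + 4αab))/2 > 1 if and only if α a b > (1−a)(1−b). In particular, two individually subcritical networks (a < 1, b < 1) can produce a supercritical conjoint network when α a b > (1−a)(1−b). -/
theorem one_lt_half_add_sqrt_iff {s D : ℝ} (hs : s ≤ 2) :
    1 < (s + √D) / 2 ↔ (2 - s) ^ 2 < D := by
  rw [← Real.lt_sqrt (by linarith)]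
  constructor <;> intro h <;> linarith

theorem stmt7_general (alp a b : ℝ)
    (ha1 : a < 1) (hb1 : b < 1) :
    (a + b + Real.sqrt ((a - b) ^ 2 + 4 * alp * a * b)) / 2 > 1 ↔
      (1 - a) * (1 - b) < alp * a * b := by
  have gap : (2 - (a + b)) ^ 2 = (a - b) ^ 2 + 4 * ((1 - a) * (1 - b)) := by ring
  rw [gt_iff_lt, one_lt_half_add_sqrt_iff (by linarith), gap]
  constructor <;> intro h <;> linarith

/-- For `a, b ≥ 0`, `α ∈ [0,1]`, with `a < 1` and `b < 1` (two individually subcritical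
networks), the conjoint network is supercritical, i.e.
`λ*_{fw} = (a + b + √((a−b)² + 4αab))/2 > 1`, if and only if `αab > (1−a)(1−b)`. -/
theorem stmt7 (alp a b : ℝ) (ha : 0 ≤ a) (hb : 0 ≤ b) (halp : 0 ≤ alp) (halp1 : alp ≤ 1)
    (ha1 : a < 1) (hb1 : b < 1) :
    (a + b + Real.sqrt ((a - b) ^ 2 + 4 * alp * a * b)) / 2 > 1 ↔
      (1 - a) * (1 - b) < alp * a * b :=
  stmt7_general alp a b ha1 hb1
end
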